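/- Euler's identity for the q-exponential: in the ring ℤ[[q]][[x]] of formal power series in x over ℤ[[q]], one has ∏_{j=1}^{∞} (1 − q^j x) = Σ_{n=0}^{∞} (−1)^n q^{n(n+1)/2} x^n / (q;q)_n, where the infinite product converges in the x-adic topology (equivalently, the coefficient of each monomial x^n q^d stabilizes). -/

import Mathlib

/-!
STATEMENT 9 (Euler's identity for the q-exponential).  Work in ℤ[[q]][[x]],
i.e. `PowerSeries (PowerSeries ℤ)`: the inner variable is `q := PowerSeries.X
: PowerSeries ℤ` and the outer variable is `x := PowerSeries.X : PowerSeries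
(PowerSeries ℤ)`; `q` is viewed in ℤ[[q]][[x]] via the constant-coefficient
embedding `PowerSeries.C`.  `(q;q)_n = ∏_{j=1}^n (1 - q^j)` is a unit of
ℤ[[q]]; `Ring.inverse` yields its inverse.

The infinite product `∏_{j=1}^∞ (1 − q^j x)` converges in the x-adic (indeed
(q,x)-adic) topology: the coefficient of `x^n q^d` in the partial products
`∏_{j=1}^{J} (1 − q^j x)` is stable for `J ≥ d` (any factor `1 − q^j x` with
`j > d` cannot contribute to `q^d`), so the product is encoded as the double
power series whose `x^n q^d`-coefficient is that stable value (we use the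
partial product with `J = d + 1`).

The statement: `∏_{j=1}^∞ (1 − q^j x) = Σ_{n≥0} (−1)^n q^{n(n+1)/2} x^n /
(q;q)_n`; note the right-hand side is the double power series whose `x^n`
coefficient is exactly `(−1)^n q^{n(n+1)/2} / (q;q)_n ∈ ℤ[[q]]`.
-/

noncomputable section
open PowerSeries

/-- `(q;q)_n = ∏_{j=1}^n (1 - q^j)`. -/
def qPoch (n : ℕ) : PowerSeries ℤ :=
  ∏ j ∈ Finset.range n, (1 - (X : PowerSeries ℤ) ^ (j + 1))

/-- The infinite product `∏_{j=1}^∞ (1 − q^j x)` in ℤ[[q]][[x]], encoded by its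
stabilized coefficients: the `x^n q^d` coefficient is that of any partial
product `∏_{j=1}^{J} (1 − q^j x)` with `J ≥ d`. -/
def eulerProd : PowerSeries (PowerSeries ℤ) :=
  PowerSeries.mk fun n => PowerSeries.mk fun d =>
    coeff (R := ℤ) d (coeff (R := PowerSeries ℤ) n
      (∏ j ∈ Finset.range (d + 1),
        (1 - PowerSeries.C (R := PowerSeries ℤ) ((X : PowerSeries ℤ) ^ (j + 1)) *
          (X : PowerSeries (PowerSeries ℤ)))))

/-
Write `P_J = ∏_{j=1}^J (1 - q^j x)` and `c_J(n)` for its `x^n`-coefficient. Appending the factor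
`1 - q^{J+1} x` changes `c_J(n)` only by a multiple of `q^{J+1}`, so `c_J(n)` converges `q`-adically
to the coefficient `a(n)` of the infinite product. Prepending a factor instead,
`P_{J+1}(x) = (1 - q x) P_J(q x)`, gives `c_{J+1}(n+1) = q^{n+1} (c_J(n+1) - c_J(n))`; in the limit
`(1 - q^{n+1}) a(n+1) = -q^{n+1} a(n)`, and with `a(0) = 1` this recursion is solved by
`a(n) = (-1)^n q^{n(n+1)/2} / (q;q)_n`.
-/

open Finset

theorem PowerSeries.rescale_C {R : Type*} [CommSemiring R] (a r : R) :
    rescale a (C r) = C r := by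
  ext n
  rcases n with _ | n <;> simp [coeff_rescale, coeff_C]

theorem PowerSeries.eq_zero_of_forall_X_pow_dvd {R : Type*} [Semiring R] {f : R⟦X⟧}
    (h : ∀ n, X ^ n ∣ f) : f = 0 :=
  ext fun d => X_pow_dvd_iff.mp (h (d + 1)) d d.lt_succ_self

section EulerProduct

variable (R : Type*) [CommRing R]

def eulerPartialProd (J : ℕ) : R⟦X⟧⟦X⟧ :=
  ∏ j ∈ range J, (1 - C (X ^ (j + 1)) * X)

-- The `x^n`-coefficient of `∏ (1 - q^j x)`, its `q^d`-coefficient read off from `d + 1` factors,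
-- so that `eulerProd = mk (eulerCoeff ℤ)` holds definitionally.
def eulerCoeff (n : ℕ) : R⟦X⟧ :=
  mk fun d => coeff d (coeff n (eulerPartialProd R (d + 1)))

variable {R}

theorem eulerPartialProd_succ (J : ℕ) :
    eulerPartialProd R (J + 1) = eulerPartialProd R J * (1 - C (X ^ (J + 1)) * X) :=
  prod_range_succ _ _

theorem eulerPartialProd_succ_eq_rescale (J : ℕ) :
    eulerPartialProd R (J + 1) = (1 - C X * X) * rescale X (eulerPartialProd R J) := by
  rw [eulerPartialProd, prod_range_succ', mul_comm, zero_add, pow_one, eulerPartialProd, map_prod]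
  congr 1
  refine prod_congr rfl fun j _ => ?_
  rw [map_sub, map_one, map_mul, rescale_C, rescale_X, ← mul_assoc, ← map_mul, ← pow_succ]

theorem coeff_zero_eulerPartialProd (J : ℕ) : coeff 0 (eulerPartialProd R J) = 1 := by
  simp [eulerPartialProd, map_prod]

theorem coeff_succ_eulerPartialProd_succ (J n : ℕ) :
    coeff (n + 1) (eulerPartialProd R (J + 1)) =
      coeff (n + 1) (eulerPartialProd R J) - X ^ (J + 1) * coeff n (eulerPartialProd R J) := by
  rw [eulerPartialProd_succ, mul_sub, mul_one, map_sub, mul_left_comm, mul_comm _ X,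
    coeff_C_mul, coeff_succ_X_mul]

theorem coeff_succ_eulerPartialProd_succ_eq_X_pow_mul (J n : ℕ) :
    coeff (n + 1) (eulerPartialProd R (J + 1)) =
      X ^ (n + 1) * (coeff (n + 1) (eulerPartialProd R J) - coeff n (eulerPartialProd R J)) := by
  rw [eulerPartialProd_succ_eq_rescale, sub_mul, one_mul, mul_assoc, map_sub, coeff_C_mul,
    coeff_succ_X_mul, coeff_rescale, coeff_rescale]
  ring

theorem X_pow_succ_dvd_coeff_eulerPartialProd_succ_sub (J n : ℕ) :
    X ^ (J + 1) ∣ coeff n (eulerPartialProd R (J + 1)) - coeff n (eulerPartialProd R J) := by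
  rcases n with _ | n
  · simp [coeff_zero_eulerPartialProd]
  · rw [coeff_succ_eulerPartialProd_succ, sub_sub_cancel_left, dvd_neg]
    exact dvd_mul_right _ _

theorem X_pow_dvd_coeff_eulerPartialProd_sub {J K : ℕ} (h : J ≤ K) (n : ℕ) :
    X ^ J ∣ coeff n (eulerPartialProd R K) - coeff n (eulerPartialProd R J) := by
  induction K, h using Nat.le_induction with
  | base => simp
  | succ K hJK ih =>
    rw [← sub_add_sub_cancel _ (coeff n (eulerPartialProd R K))]
    exact dvd_add ((pow_dvd_pow X (hJK.trans K.le_succ)).trans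
      (X_pow_succ_dvd_coeff_eulerPartialProd_succ_sub K n)) ih

theorem X_pow_dvd_eulerCoeff_sub (J n : ℕ) :
    X ^ J ∣ eulerCoeff R n - coeff n (eulerPartialProd R J) := by
  refine X_pow_dvd_iff.mpr fun d hd => ?_
  rw [map_sub, eulerCoeff, coeff_mk, ← neg_sub, neg_eq_zero]
  exact X_pow_dvd_iff.mp (X_pow_dvd_coeff_eulerPartialProd_sub hd n) d d.lt_succ_self

theorem eulerCoeff_zero : eulerCoeff R 0 = 1 := by
  ext d
  simp [eulerCoeff, coeff_zero_eulerPartialProd, coeff_one]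

theorem one_sub_X_pow_mul_eulerCoeff_succ (n : ℕ) :
    (1 - X ^ (n + 1)) * eulerCoeff R (n + 1) = -(X ^ (n + 1) * eulerCoeff R n) := by
  rw [← sub_eq_zero]
  refine eq_zero_of_forall_X_pow_dvd fun J => ?_
  have hJ := coeff_succ_eulerPartialProd_succ_eq_X_pow_mul (R := R) J n
  have key : (1 - X ^ (n + 1)) * eulerCoeff R (n + 1) - -(X ^ (n + 1) * eulerCoeff R n) =
      (eulerCoeff R (n + 1) - coeff (n + 1) (eulerPartialProd R (J + 1))) +
        X ^ (n + 1) * ((coeff (n + 1) (eulerPartialProd R J) - eulerCoeff R (n + 1)) -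
          (coeff n (eulerPartialProd R J) - eulerCoeff R n)) := by
    rw [hJ]; ring
  rw [key]
  refine dvd_add ((pow_dvd_pow X J.le_succ).trans (X_pow_dvd_eulerCoeff_sub (J + 1) (n + 1)))
    (dvd_mul_of_dvd_right (dvd_sub ?_ ?_) _)
  · exact dvd_sub_comm.mp (X_pow_dvd_eulerCoeff_sub J (n + 1))
  · exact dvd_sub_comm.mp (X_pow_dvd_eulerCoeff_sub J n)

end EulerProduct

theorem qPoch_succ (n : ℕ) : qPoch (n + 1) = qPoch n * (1 - (X : ℤ⟦X⟧) ^ (n + 1)) :=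
  prod_range_succ _ _

theorem isUnit_qPoch (n : ℕ) : IsUnit (qPoch n) := by
  simp [isUnit_iff_constantCoeff, qPoch]

theorem qPoch_mul_eulerCoeff (n : ℕ) :
    qPoch n * eulerCoeff ℤ n = (-1) ^ n * X ^ (n * (n + 1) / 2) := by
  induction n with
  | zero => simp [qPoch, eulerCoeff_zero]
  | succ n ih =>
    have triangle : (n + 1) * (n + 1 + 1) / 2 = n * (n + 1) / 2 + (n + 1) := by
      rw [show (n + 1) * (n + 1 + 1) = n * (n + 1) + 2 * (n + 1) by ring,
        Nat.add_mul_div_left _ _ two_pos]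
    rw [qPoch_succ, mul_assoc, one_sub_X_pow_mul_eulerCoeff_succ, mul_neg, mul_left_comm, ih,
      triangle, pow_add, pow_succ]
    ring

theorem eulerCoeff_eq (n : ℕ) :
    eulerCoeff ℤ n = (-1) ^ n * X ^ (n * (n + 1) / 2) * Ring.inverse (qPoch n) := by
  rw [← qPoch_mul_eulerCoeff, mul_comm (qPoch n), mul_assoc, Ring.mul_inverse_cancel _ (isUnit_qPoch n),
    mul_one]

theorem stmt9 :
    eulerProd = PowerSeries.mk fun n =>
      ((-1 : PowerSeries ℤ) ^ n * (X : PowerSeries ℤ) ^ (n * (n + 1) / 2) *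
        Ring.inverse (qPoch n)) := by
  have h : eulerProd = mk (eulerCoeff ℤ) := rfl
  rw [h]
  exact congrArg mk (funext eulerCoeff_eq)
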